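/- arXiv:0711.0676 — 2 statements merged into one kernel-verified Lean document; each statement's English description precedes it below -/
import Mathlib

section
/- Let p be a positive even integer, let l ≥ 2 be an integer, and let δ > 0. There exists a 0-symmetric measurable set E ⊂ 𝕋 with |E| > 1 − δ which has 0 as a point of density 1, such that for every c > 1/l there exists an idempotent trigonometric polynomial f with ∫_E |f(x)|^p dx ≤ c · ∫_𝕋 |f(x)|^p dx. Hence the Wiener–Shapiro inequality fails when the symmetric interval (−a,a) is replaced by a measurable set having 0 as a density point. -/
/-!
Take `N = 2 l` and `f(x) = ∑_{j < n} e(N j x) = D_n(N x)`, a `1/N`-periodic idempotent, and let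
`E` be the circle with small `ε`-holes around the nonzero points `k / N`. By periodicity the ball
of radius `1 / (2N)` around `0` carries exactly a `1/N` share of `∫ |f|^p`, while on the rest of
`E` the geometric-sum bound `|D_n(y)| ≤ 1 / (2‖y‖)` keeps `|f|` below `1 / (2 N ε)`. Since
`∫ |f|^p = ∫ |D_n|^p ≥ n / 32` for `p ≥ 2` (the peak of `D_n` near `0`), taking `n` large gives
`∫_E |f|^p ≤ (2 / N) ∫ |f|^p = (1 / l) ∫ |f|^p`.
-/

open MeasureTheory Finset Filter
open Metric Real Topology

local notation "𝕋" => AddCircle (1 : ℝ)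

lemma fourier_natCast_eq_pow {T : ℝ} (n : ℕ) (x : AddCircle T) :
    fourier n x = fourier 1 x ^ n := by
  induction n with
  | zero => simp
  | succ n ih => rw [Nat.cast_succ, fourier_add, ih, pow_succ]

namespace AddCircle

variable {T : ℝ} [hT : Fact (0 < T)]

lemma volume_real_ball {x : AddCircle T} {ε : ℝ} (hε : 0 ≤ ε) (hεT : 2 * ε ≤ T) :
    volume.real (ball x ε) = 2 * ε := by
  rw [measureReal_def, ← measure_congr closedBall_ae_eq_ball, volume_closedBall,
    min_eq_right hεT, ENNReal.toReal_ofReal (by linarith)]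

lemma tendsto_volume_real_inter_ball_div_of_mem_nhds {s : Set (AddCircle T)} {x : AddCircle T}
    (hs : s ∈ 𝓝 x) :
    Tendsto (fun h => volume.real (s ∩ ball x h) / (2 * h)) (𝓝[>] 0) (𝓝 1) := by
  obtain ⟨ε, hε, hball⟩ := Metric.mem_nhds_iff.mp hs
  refine tendsto_const_nhds.congr' ?_
  filter_upwards [Ioo_mem_nhdsGT (lt_min hε (half_pos hT.out))] with h ⟨hh0, hh⟩
  have hball_h : ball x h ⊆ s := (ball_subset_ball (hh.le.trans (min_le_left _ _))).trans hball
  have h2h : 2 * h ≤ T := by linarith [min_le_right ε (T / 2)]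
  rw [Set.inter_eq_right.mpr hball_h, volume_real_ball hh0.le h2h, div_self (by positivity)]

lemma measurePreserving_nsmul {N : ℕ} (hN : N ≠ 0) :
    MeasurePreserving (fun x : AddCircle T => N • x) := by
  simpa only [natCast_zsmul] using
    Measure.measurePreserving_zsmul (volume : Measure (AddCircle T)) (n := N) (by exact_mod_cast hN)

lemma integral_comp_nsmul {E : Type*} [NormedAddCommGroup E] [NormedSpace ℝ E] {N : ℕ} (hN : N ≠ 0)
    {f : AddCircle T → E} (hf : AEStronglyMeasurable f) :
    ∫ x, f (N • x) = ∫ y, f y := by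
  have h := measurePreserving_nsmul (T := T) hN
  calc ∫ x, f (N • x) = ∫ y, f y ∂(volume.map fun x : AddCircle T => N • x) :=
        (integral_map h.aemeasurable (by rwa [h.map_eq])).symm
    _ = ∫ y, f y := by rw [h.map_eq]

lemma integral_eq_addOrderOf_nsmul_setIntegral_ball {E : Type*} [NormedAddCommGroup E]
    [NormedSpace ℝ E] {f : AddCircle T → E} (hf : Integrable f) {u : AddCircle T}
    (hu : IsOfFinAddOrder u) (hfu : Function.Periodic f u) (x : AddCircle T) :
    ∫ y, f y = addOrderOf u • ∫ y in ball x (T / (2 * addOrderOf u)), f y := by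
  have : Countable (AddSubgroup.zmultiples u) := hu.finite_zmultiples.to_subtype.to_countable
  rw [(isAddFundamentalDomain_of_ae_ball _ u x hu (ae_eq_refl _)).integral_eq_tsum'' f hf]
  have hinv (g : AddSubgroup.zmultiples u) :
      ∫ y in ball x (T / (2 * addOrderOf u)), f (g +ᵥ y) =
        ∫ y in ball x (T / (2 * addOrderOf u)), f y := by
    obtain ⟨g, k, rfl⟩ := g
    refine integral_congr_ae (ae_of_all _ fun y => ?_)
    change f (k • u + y) = f y
    rw [add_comm]
    exact hfu.zsmul k y
  rw [tsum_congr hinv, tsum_const, Nat.card_zmultiples]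

end AddCircle

open AddCircle

/-- For `ε ≤ T / (2 * N)`, `‖N • x‖ < N * ε` says exactly that `x` is `ε`-close to some
`N`-torsion point `k T / N`, so this is the circle with the `ε`-balls around the nonzero
`N`-torsion points removed. -/
def holedCircle (T : ℝ) (N : ℕ) (ε : ℝ) : Set (AddCircle T) :=
  ball 0 ε ∪ {x | N * ε ≤ ‖N • x‖}

section holedCircle

variable {T : ℝ} {N : ℕ} {ε : ℝ}

lemma measurableSet_holedCircle : MeasurableSet (holedCircle T N ε) :=
  measurableSet_ball.union (measurableSet_le measurable_const (by fun_prop))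

lemma neg_holedCircle : -holedCircle T N ε = holedCircle T N ε := by
  ext x
  simp [holedCircle]

variable [hT : Fact (0 < T)]

lemma sub_le_volume_real_holedCircle (hN : N ≠ 0) (hε : 0 ≤ ε) :
    T - 2 * N * ε ≤ volume.real (holedCircle T N ε) := by
  have hmp := measurePreserving_nsmul (T := T) hN
  have hfar : {x : AddCircle T | N * ε ≤ ‖N • x‖} = ((N • ·) ⁻¹' ball 0 (N * ε))ᶜ := by
    ext x
    simp
  have hnear : volume.real ((N • ·) ⁻¹' ball (0 : AddCircle T) (N * ε)) ≤ 2 * N * ε := by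
    rw [measureReal_def, hmp.measure_preimage measurableSet_ball.nullMeasurableSet,
      ← measureReal_def]
    calc volume.real (ball (0 : AddCircle T) (N * ε))
        ≤ volume.real (closedBall (0 : AddCircle T) (N * ε)) :=
          measureReal_mono ball_subset_closedBall
      _ ≤ 2 * N * ε := by
          rw [measureReal_def, AddCircle.volume_closedBall,
            ENNReal.toReal_ofReal (le_min hT.out.le (by positivity))]
          linarith [min_le_right T (2 * (N * ε))]
  calc T - 2 * N * ε ≤ volume.real {x : AddCircle T | N * ε ≤ ‖N • x‖} := by
        rw [hfar, measureReal_compl (measurableSet_ball.preimage hmp.measurable), measureReal_def,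
          AddCircle.measure_univ, ENNReal.toReal_ofReal hT.out.le]
        linarith
    _ ≤ volume.real (holedCircle T N ε) := measureReal_mono Set.subset_union_right

lemma setIntegral_holedCircle_le {G : AddCircle T → ℝ} (hG : Continuous G) (hG0 : 0 ≤ G) {B : ℝ}
    (hB : 0 ≤ B) (hGB : ∀ y, N * ε ≤ ‖y‖ → G y ≤ B) (hN : N ≠ 0) (hεN : ε ≤ T / (2 * N)) :
    ∫ x in holedCircle T N ε, G (N • x) ≤ (∫ y, G y) / N + T * B := by
  set F : AddCircle T → ℝ := fun x => G (N • x)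
  have hFint : Integrable F :=
    (hG.comp (continuous_nsmul N)).integrable_of_hasCompactSupport (.of_compactSpace _)
  set u : AddCircle T := ((T / N : ℝ) : AddCircle T)
  have hu : addOrderOf u = N := addOrderOf_period_div (Nat.pos_of_ne_zero hN)
  have hper : Function.Periodic F u := fun x => by
    simp only [F, nsmul_add, ← hu, addOrderOf_nsmul_eq_zero, add_zero]
  have hcell : ∫ x in ball 0 (T / (2 * N)), F x = (∫ y, G y) / N := by
    have := integral_eq_addOrderOf_nsmul_setIntegral_ball hFint
      (addOrderOf_pos_iff.mp (hu ▸ Nat.pos_of_ne_zero hN)) hper 0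
    rw [hu, integral_comp_nsmul hN hG.aestronglyMeasurable, nsmul_eq_mul] at this
    rw [this, mul_div_cancel_left₀ _ (by exact_mod_cast hN)]
  have hnear : ∫ x in holedCircle T N ε ∩ ball 0 (T / (2 * N)), F x ≤ (∫ y, G y) / N :=
    hcell ▸ setIntegral_mono_set hFint.integrableOn (ae_of_all _ fun x => hG0 (N • x))
      Set.inter_subset_right.eventuallyLE
  have hfar : ∫ x in holedCircle T N ε \ ball 0 (T / (2 * N)), F x ≤ T * B := by
    have hmeas : MeasurableSet (holedCircle T N ε \ ball 0 (T / (2 * N))) :=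
      measurableSet_holedCircle.diff measurableSet_ball
    calc ∫ x in holedCircle T N ε \ ball 0 (T / (2 * N)), F x
        ≤ ∫ x in holedCircle T N ε \ ball 0 (T / (2 * N)), B :=
          setIntegral_mono_on hFint.integrableOn (integrableOn_const (measure_ne_top _ _)) hmeas
            fun x hx => hGB _ (hx.1.resolve_left fun h => hx.2 (ball_subset_ball hεN h))
      _ = volume.real (holedCircle T N ε \ ball 0 (T / (2 * N))) * B := by
          rw [setIntegral_const, smul_eq_mul]
      _ ≤ volume.real (Set.univ : Set (AddCircle T)) * B :=
          mul_le_mul_of_nonneg_right (measureReal_mono (Set.subset_univ _)) hB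
      _ = T * B := by
          rw [measureReal_def, AddCircle.measure_univ, ENNReal.toReal_ofReal hT.out.le]
  rw [← integral_inter_add_sdiff measurableSet_ball hFint.integrableOn]
  exact add_le_add hnear hfar

end holedCircle

lemma exists_coe_eq_norm_eq_abs (y : 𝕋) : ∃ s : ℝ, (s : 𝕋) = y ∧ ‖y‖ = |s| ∧ |s| ≤ 1 / 2 := by
  induction y using QuotientAddGroup.induction_on with | H t => ?_
  have hs : |t - round t| ≤ 1 / 2 := abs_sub_round t
  refine ⟨t - round t, ?_, ?_, hs⟩
  · rw [AddCircle.coe_sub, sub_eq_self, coe_eq_zero_iff]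
    exact ⟨round t, by simp⟩
  · rw [AddCircle.norm_eq]
    simp

lemma fourier_coe_eq_exp (n : ℤ) (s : ℝ) :
    fourier n (s : 𝕋) = Complex.exp (Complex.I * (2 * π * n * s : ℝ)) := by
  rw [fourier_coe_apply]
  push_cast
  ring_nf

lemma four_mul_norm_le_norm_fourier_one_sub_one (y : 𝕋) : 4 * ‖y‖ ≤ ‖fourier 1 y - 1‖ := by
  obtain ⟨s, rfl, hy, hs⟩ := exists_coe_eq_norm_eq_abs y
  have hjordan : 2 / π * |π * s| ≤ |Real.sin (π * s)| := by
    refine mul_abs_le_abs_sin ?_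
    rw [abs_mul, abs_of_pos pi_pos]
    nlinarith [pi_pos]
  rw [fourier_coe_eq_exp, Complex.norm_exp_I_mul_ofReal_sub_one, hy, norm_mul, Real.norm_eq_abs,
    Real.norm_eq_abs, abs_two, show 2 * π * ((1 : ℤ) : ℝ) * s / 2 = π * s by push_cast; ring]
  rw [abs_mul, abs_of_pos pi_pos] at hjordan
  field_simp at hjordan
  linarith

lemma norm_fourier_sub_one_le (n : ℤ) (y : 𝕋) : ‖fourier n y - 1‖ ≤ 2 * π * |n| * ‖y‖ := by
  obtain ⟨s, rfl, hy, -⟩ := exists_coe_eq_norm_eq_abs y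
  rw [fourier_coe_eq_exp, hy]
  refine norm_exp_I_mul_ofReal_sub_one_le.trans_eq ?_
  rw [Real.norm_eq_abs, abs_mul, abs_mul, abs_mul, abs_two, abs_of_pos pi_pos, Int.cast_abs]

noncomputable def dirichletSum (n : ℕ) (y : 𝕋) : ℂ := ∑ j ∈ range n, fourier j y

lemma continuous_dirichletSum (n : ℕ) : Continuous (dirichletSum n) :=
  continuous_finsetSum _ fun j _ => (fourier j).continuous

lemma norm_dirichletSum_le {y : 𝕋} (hy : y ≠ 0) (n : ℕ) : ‖dirichletSum n y‖ ≤ (2 * ‖y‖)⁻¹ := by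
  set z := fourier 1 y
  have hy' : 0 < ‖y‖ := norm_pos_iff.mpr hy
  have hz : 4 * ‖y‖ ≤ ‖z - 1‖ := four_mul_norm_le_norm_fourier_one_sub_one y
  have hz1 : z - 1 ≠ 0 := norm_pos_iff.mp (by linarith)
  have hzn : ‖z ^ n - 1‖ ≤ 2 := by
    have hz_norm : ‖z‖ = 1 := Circle.norm_coe _
    refine (norm_sub_le _ _).trans ?_
    rw [norm_pow, hz_norm, one_pow, norm_one]
    norm_num
  rw [dirichletSum, sum_congr rfl fun j _ => fourier_natCast_eq_pow j y,
    geom_sum_eq (sub_ne_zero.mp hz1), norm_div]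
  calc ‖z ^ n - 1‖ / ‖z - 1‖ ≤ 2 / (4 * ‖y‖) := div_le_div₀ zero_le_two hzn (by positivity) hz
    _ = (2 * ‖y‖)⁻¹ := by field_simp; ring

lemma half_le_norm_dirichletSum {n : ℕ} {y : 𝕋} (hy : 16 * n * ‖y‖ ≤ 1) :
    (n : ℝ) / 2 ≤ ‖dirichletSum n y‖ := by
  have hclose : ‖(n : ℂ) - dirichletSum n y‖ ≤ n / 2 :=
    calc ‖(n : ℂ) - dirichletSum n y‖ = ‖∑ j ∈ range n, (1 - fourier j y)‖ := by
          simp [dirichletSum, sum_sub_distrib]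
      _ ≤ ∑ j ∈ range n, 2 * π * n * ‖y‖ := by
          refine norm_sum_le_of_le _ fun j hj => ?_
          rw [norm_sub_rev]
          refine (norm_fourier_sub_one_le j y).trans ?_
          gcongr
          exact_mod_cast (mem_range.mp hj).le
      _ = n * (2 * π * (n * ‖y‖)) := by rw [sum_const, card_range, nsmul_eq_mul]; ring
      _ ≤ n * (1 / 2) := by
          gcongr
          nlinarith [pi_le_four, mul_nonneg n.cast_nonneg (norm_nonneg y)]
      _ = n / 2 := by ring
  have := norm_sub_norm_le (n : ℂ) (dirichletSum n y)
  rw [Complex.norm_natCast] at this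
  linarith

lemma div_le_integral_norm_dirichletSum_pow {p n : ℕ} (hp : 2 ≤ p) (hn : 2 ≤ n) :
    (n : ℝ) / 32 ≤ ∫ y, ‖dirichletSum n y‖ ^ p := by
  set r : ℝ := (16 * n)⁻¹
  have hn' : (2 : ℝ) ≤ n := by exact_mod_cast hn
  have hr : 0 < r := by positivity
  have hnr : 16 * n * r = 1 := mul_inv_cancel₀ (by positivity)
  have hcont : Continuous fun y => ‖dirichletSum n y‖ ^ p :=
    (continuous_dirichletSum n).norm.pow p
  have hint : Integrable fun y => ‖dirichletSum n y‖ ^ p :=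
    hcont.integrable_of_hasCompactSupport (.of_compactSpace _)
  calc (n : ℝ) / 32 = ((n : ℝ) / 2) ^ 2 * (2 * r) := by linear_combination -(n : ℝ) / 32 * hnr
    _ ≤ ((n : ℝ) / 2) ^ p * volume.real (ball (0 : 𝕋) r) := by
        rw [volume_real_ball hr.le (by nlinarith)]
        gcongr
        linarith
    _ = ∫ y in ball (0 : 𝕋) r, ((n : ℝ) / 2) ^ p := by rw [setIntegral_const, smul_eq_mul, mul_comm]
    _ ≤ ∫ y in ball (0 : 𝕋) r, ‖dirichletSum n y‖ ^ p := by
        refine setIntegral_mono_on (integrableOn_const (measure_ne_top _ _)) hint.integrableOn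
          measurableSet_ball fun y hy => ?_
        refine pow_le_pow_left₀ (by positivity) (half_le_norm_dirichletSum ?_) p
        rw [mem_ball, dist_zero_right] at hy
        nlinarith
    _ ≤ ∫ y, ‖dirichletSum n y‖ ^ p :=
        setIntegral_le_integral hint (ae_of_all _ fun y => by positivity)

lemma tendsto_integral_norm_dirichletSum_pow {p : ℕ} (hp : 2 ≤ p) :
    Tendsto (fun n => ∫ y, ‖dirichletSum n y‖ ^ p) atTop atTop :=
  tendsto_atTop_mono' _
    ((eventually_ge_atTop 2).mono fun _ => div_le_integral_norm_dirichletSum_pow hp)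
    (tendsto_natCast_atTop_atTop.atTop_div_const (by norm_num))

lemma sum_fourier_image_mul {N : ℕ} (hN : N ≠ 0) (n : ℕ) (x : 𝕋) :
    ∑ h ∈ (range n).image (fun j : ℕ => (N : ℤ) * j), fourier h x = dirichletSum n (N • x) := by
  rw [sum_image fun a _ b _ hab => by simpa [hN] using hab]
  refine sum_congr rfl fun j _ => ?_
  rw [fourier_apply, fourier_apply, mul_comm, mul_zsmul]
  simp only [natCast_zsmul]

lemma exists_setIntegral_holedCircle_le {p N : ℕ} (hp : 2 ≤ p) (hN : N ≠ 0) {ε : ℝ} (hε : 0 < ε)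
    (hεN : ε ≤ 1 / (2 * N)) :
    ∃ n ≥ 1, ∫ x in holedCircle 1 N ε, ‖dirichletSum n (N • x)‖ ^ p ≤
      2 / N * ∫ y, ‖dirichletSum n y‖ ^ p := by
  have hN' : (0 : ℝ) < N := by positivity
  set B := (2 * (N * ε))⁻¹ ^ p
  obtain ⟨n, hnB, hn⟩ := (((tendsto_integral_norm_dirichletSum_pow hp).eventually_ge_atTop
    (N * B)).and (eventually_ge_atTop 1)).exists
  refine ⟨n, hn, ?_⟩
  have hcont : Continuous fun y => ‖dirichletSum n y‖ ^ p := (continuous_dirichletSum n).norm.pow p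
  have htail (y : 𝕋) (hy : N * ε ≤ ‖y‖) : ‖dirichletSum n y‖ ^ p ≤ B := by
    have hy0 : y ≠ 0 := norm_pos_iff.mp (lt_of_lt_of_le (by positivity) hy)
    refine pow_le_pow_left₀ (norm_nonneg _) ((norm_dirichletSum_le hy0 n).trans ?_) p
    gcongr
  set I := ∫ y, ‖dirichletSum n y‖ ^ p
  have hBI : B ≤ I / N := by rw [le_div_iff₀ hN']; linarith
  calc ∫ x in holedCircle 1 N ε, ‖dirichletSum n (N • x)‖ ^ p
      ≤ I / N + 1 * B :=
        setIntegral_holedCircle_le hcont (fun y => by positivity) (by positivity) htail hN hεN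
    _ ≤ I / N + I / N := by linarith
    _ = 2 / N * I := by ring

/-- **Failure of the Wiener–Shapiro inequality on measurable sets with `0` a density
point.** For `p` a positive even integer, `l ≥ 2` and `δ > 0`, there is a
`0`-symmetric measurable set `E ⊆ 𝕋` with `|E| > 1 - δ` having `0` as a point of
density `1`, such that for every `c > 1/l` some nonzero idempotent `f = ∑_{h∈H} e_h`
satisfies `∫_E |f|^p ≤ c ∫_𝕋 |f|^p`. -/
theorem wiener_shapiro_fails_on_density_sets
    (p : ℕ) (hp_even : Even p) (hp_pos : 0 < p)
    (l : ℕ) (hl : 2 ≤ l) (δ : ℝ) (hδ : 0 < δ) :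
    ∃ E : Set (AddCircle (1 : ℝ)), MeasurableSet E ∧ (-E) = E ∧
      1 - δ < (volume E).toReal ∧
      Tendsto (fun h : ℝ =>
          (volume (E ∩ Metric.ball (0 : AddCircle (1 : ℝ)) h)).toReal / (2 * h))
        (nhdsWithin 0 (Set.Ioi 0)) (nhds 1) ∧
      ∀ c : ℝ, 1 / l < c → ∃ H : Finset ℤ, H.Nonempty ∧
        (∫ x in E, ‖∑ h ∈ H, fourier h x‖ ^ p ∂volume) ≤
          c * ∫ x : AddCircle (1 : ℝ), ‖∑ h ∈ H, fourier h x‖ ^ p := by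
  have hp : 2 ≤ p := by obtain ⟨k, rfl⟩ := hp_even; omega
  set N := 2 * l
  have hN : N ≠ 0 := by omega
  set ε := min (δ / (4 * N)) (1 / (2 * N))
  have hε : 0 < ε := by positivity
  refine ⟨holedCircle 1 N ε, measurableSet_holedCircle, neg_holedCircle, ?_,
    tendsto_volume_real_inter_ball_div_of_mem_nhds
      (mem_of_superset (ball_mem_nhds (0 : 𝕋) hε) Set.subset_union_left), fun c hc => ?_⟩
  · have h2Nε : 2 * N * ε ≤ δ / 2 := by
      have := min_le_left (δ / (4 * N)) (1 / (2 * N))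
      rw [le_div_iff₀ (by positivity)] at this
      linarith
    show 1 - δ < volume.real _
    linarith [sub_le_volume_real_holedCircle (T := 1) hN hε.le]
  obtain ⟨n, hn, hle⟩ := exists_setIntegral_holedCircle_le hp hN hε (min_le_right _ _)
  refine ⟨(range n).image (fun j : ℕ => (N : ℤ) * j),
    (nonempty_range_iff.mpr (by omega)).image _, ?_⟩
  simp only [sum_fourier_image_mul hN]
  rw [integral_comp_nsmul hN (f := fun y => ‖dirichletSum n y‖ ^ p)
    ((continuous_dirichletSum n).norm.pow p).aestronglyMeasurable]
  refine hle.trans (mul_le_mul_of_nonneg_right ?_ (integral_nonneg fun y => by positivity))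
  convert hc.le using 1
  push_cast [N]
  field_simp
end

section
/- Let 0 < q ≤ p < 2 and let ε > 0. Then there exist n ≥ 1 and signs η_0, …, η_{n-1} ∈ {−1, +1} such that ‖D_n‖_{L^p(𝕋)} ≤ ε · ‖∑_{k=0}^{n-1} η_k e_k‖_{L^q(𝕋)}, where D_n is the Dirichlet kernel. -/
/-!
With `n = 2 ^ m`, the signs are the coefficients of the Rudin–Shapiro polynomial `P_m`. The
parallelogram law gives `|P_m|² + |Q_m|² = 2n`, so `‖P_m‖_∞ ≤ √(2n)`, while `‖P_m‖₂ = √n` by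
Parseval; then `∫ |P_m|² ≤ ‖P_m‖_∞ ^ (2 - q) ∫ |P_m| ^ q` forces `‖P_m‖_q ≥ 2 ^ (-1/q) √(2n)`.

The Dirichlet kernel instead has `‖D_n‖₁ ≤ 1 + log n` and `‖D_n‖₂ = √n`. Splitting `|D_n|` at
height `n / (1 + log n)` interpolates these to `∫ |D_n| ^ t ≤ 2 r ^ (2 - t) √n ^ t` for
`t = max p 1 ∈ [1, 2)`, where `r = (1 + log n) / √n → 0`; hence `‖D_n‖_p ≤ ‖D_n‖_t = o(√n)`.
-/

open MeasureTheory Finset Filter Topology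

noncomputable def fourierExp (k : ℕ) (x : ℝ) : ℂ :=
  Complex.exp (2 * Real.pi * Complex.I * (k : ℂ) * (x : ℂ))

@[fun_prop]
lemma continuous_fourierExp (k : ℕ) : Continuous (fourierExp k) := by
  unfold fourierExp; fun_prop

@[simp]
lemma norm_fourierExp (k : ℕ) (x : ℝ) : ‖fourierExp k x‖ = 1 := by
  rw [fourierExp, Complex.norm_exp]
  simp

@[simp]
lemma fourierExp_zero (x : ℝ) : fourierExp 0 x = 1 := by
  simp [fourierExp]

lemma fourierExp_add (j k : ℕ) (x : ℝ) :
    fourierExp (j + k) x = fourierExp j x * fourierExp k x := by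
  rw [fourierExp, fourierExp, fourierExp, ← Complex.exp_add]
  push_cast
  ring_nf

lemma fourierExp_eq_pow (k : ℕ) (x : ℝ) : fourierExp k x = fourierExp 1 x ^ k := by
  rw [fourierExp, fourierExp, ← Complex.exp_nat_mul]
  ring_nf

lemma fourierExp_one_sub (k : ℕ) (x : ℝ) :
    fourierExp k (1 - x) = starRingEnd ℂ (fourierExp k x) := by
  rw [fourierExp, fourierExp, ← Complex.exp_conj]
  have : (2 * Real.pi * Complex.I * (k : ℂ) * ((1 - x : ℝ) : ℂ)) =
      k * (2 * Real.pi * Complex.I) + starRingEnd ℂ (2 * Real.pi * Complex.I * k * x) := by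
    simp only [map_mul, Complex.conj_I, Complex.conj_ofReal, map_ofNat, map_natCast]
    push_cast
    ring
  rw [this, Complex.exp_add, Complex.exp_nat_mul_two_pi_mul_I, one_mul]

lemma norm_fourierExp_one_sub_one (x : ℝ) :
    ‖fourierExp 1 x - 1‖ = 2 * |Real.sin (Real.pi * x)| := by
  have : fourierExp 1 x = Complex.exp (Complex.I * ((2 * Real.pi * x : ℝ) : ℂ)) := by
    rw [fourierExp]; push_cast; ring_nf
  rw [this, Complex.norm_exp_I_mul_ofReal_sub_one, norm_mul, Real.norm_eq_abs,
    Real.norm_eq_abs, abs_two]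
  ring_nf

lemma integral_exp_two_pi_I_int_mul_eq_zero {m : ℤ} (hm : m ≠ 0) :
    ∫ x in (0 : ℝ)..1, Complex.exp (2 * Real.pi * Complex.I * m * x) = 0 := by
  have hc : (2 * Real.pi * Complex.I * m : ℂ) ≠ 0 := by
    simp [Real.pi_ne_zero, Complex.I_ne_zero, hm]
  rw [integral_exp_mul_complex hc]
  simp [mul_comm _ (m : ℂ), Complex.exp_int_mul_two_pi_mul_I]

lemma integral_fourierExp_mul_conj (j k : ℕ) :
    ∫ x in (0 : ℝ)..1, fourierExp j x * starRingEnd ℂ (fourierExp k x) =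
      if j = k then 1 else 0 := by
  have h (x : ℝ) : fourierExp j x * starRingEnd ℂ (fourierExp k x) =
      Complex.exp (2 * Real.pi * Complex.I * ((j - k : ℤ) : ℂ) * x) := by
    rw [fourierExp, fourierExp, ← Complex.exp_conj, ← Complex.exp_add]
    simp only [map_mul, Complex.conj_I, Complex.conj_ofReal, map_ofNat, map_natCast]
    push_cast
    ring_nf
  simp_rw [h]
  split_ifs with hjk
  · simp [hjk]
  · exact integral_exp_two_pi_I_int_mul_eq_zero (sub_ne_zero.mpr (by exact_mod_cast hjk))

theorem integral_norm_sum_fourierExp_sq (c : ℕ → ℂ) (N : ℕ) :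
    ∫ x in (0 : ℝ)..1, ‖∑ k ∈ range N, c k * fourierExp k x‖ ^ 2 = ∑ k ∈ range N, ‖c k‖ ^ 2 := by
  apply Complex.ofReal_injective
  have hexpand (x : ℝ) : ((‖∑ k ∈ range N, c k * fourierExp k x‖ ^ 2 : ℝ) : ℂ) =
      ∑ j ∈ range N, ∑ k ∈ range N,
        c j * starRingEnd ℂ (c k) * (fourierExp j x * starRingEnd ℂ (fourierExp k x)) := by
    rw [Complex.ofReal_pow, ← Complex.mul_conj', map_sum, sum_mul_sum]
    simp only [map_mul, mul_mul_mul_comm]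
  have hint (j k : ℕ) : IntervalIntegrable
      (fun x => c j * starRingEnd ℂ (c k) * (fourierExp j x * starRingEnd ℂ (fourierExp k x)))
      volume 0 1 := by
    apply Continuous.intervalIntegrable; fun_prop
  rw [← intervalIntegral.integral_ofReal]
  simp_rw [hexpand]
  rw [intervalIntegral.integral_finsetSum fun j _ => by
    apply Continuous.intervalIntegrable; fun_prop]
  simp_rw [intervalIntegral.integral_finsetSum fun k _ => hint _ k,
    intervalIntegral.integral_const_mul, integral_fourierExp_mul_conj, mul_ite, mul_zero,
    mul_one, sum_ite_eq]
  push_cast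
  exact sum_congr rfl fun k hk => by rw [if_pos hk, Complex.mul_conj']

lemma Real.rpow_le_mul_add_mul_sq {t a y : ℝ} (ht1 : 1 ≤ t) (ht2 : t ≤ 2) (ha : 0 < a)
    (hy : 0 ≤ y) : y ^ t ≤ a ^ (t - 1) * y + a ^ (t - 2) * y ^ 2 := by
  have h1 : 0 ≤ a ^ (t - 1) * y := by positivity
  have h2 : 0 ≤ a ^ (t - 2) * y ^ 2 := by positivity
  rcases le_or_gt y a with hya | hay
  · have : y ^ t ≤ a ^ (t - 1) * y := by
      calc y ^ t = y ^ (t - 1) * y ^ (1 : ℝ) := by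
            rw [← Real.rpow_add_of_nonneg hy (by linarith) zero_le_one, sub_add_cancel]
        _ ≤ a ^ (t - 1) * y := by
            rw [Real.rpow_one]; gcongr
    linarith
  · have : y ^ t ≤ a ^ (t - 2) * y ^ 2 := by
      calc y ^ t = y ^ (t - 2) * y ^ (2 : ℝ) := by
            rw [← Real.rpow_add (ha.trans hay), sub_add_cancel]
        _ ≤ a ^ (t - 2) * y ^ 2 := by
            rw [Real.rpow_two]
            exact mul_le_mul_of_nonneg_right
              (Real.rpow_le_rpow_of_nonpos ha hay.le (by linarith)) (sq_nonneg y)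
    linarith

lemma integral_sq_le_rpow_mul_integral_rpow {F : ℝ → ℝ} (hF : Continuous F) {A q : ℝ}
    (hq0 : 0 ≤ q) (hq2 : q ≤ 2) (hF0 : ∀ x, 0 ≤ F x) (hFA : ∀ x, F x ≤ A) :
    ∫ x in (0 : ℝ)..1, F x ^ 2 ≤ A ^ (2 - q) * ∫ x in (0 : ℝ)..1, F x ^ q := by
  rw [← intervalIntegral.integral_const_mul]
  refine intervalIntegral.integral_mono_on zero_le_one ((hF.pow 2).intervalIntegrable 0 1)
    (((hF.rpow_const fun _ => Or.inr hq0).intervalIntegrable 0 1).const_mul _) fun x _ => ?_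
  have hFq := Real.rpow_nonneg (hF0 x) q
  calc F x ^ 2 = F x ^ (2 - q) * F x ^ q := by
        rw [← Real.rpow_add_of_nonneg (hF0 x) (by linarith) hq0, sub_add_cancel, Real.rpow_two]
    _ ≤ A ^ (2 - q) * F x ^ q := by
        gcongr
        · exact hF0 x
        · exact hFA x

theorem MeasureTheory.rpow_integral_rpow_le {α : Type*} [MeasurableSpace α] {μ : Measure α}
    [IsProbabilityMeasure μ] {f : α → ℝ} (hf : 0 ≤ f) {p t : ℝ} (hp : 0 < p) (hpt : p ≤ t)
    (hfp : Integrable (fun x => f x ^ p) μ) (hft : Integrable (fun x => f x ^ t) μ) :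
    (∫ x, f x ^ p ∂μ) ^ (1 / p) ≤ (∫ x, f x ^ t ∂μ) ^ (1 / t) := by
  have ht : 0 < t := hp.trans_le hpt
  have hpow (x : α) : (f x ^ t) ^ (p / t) = f x ^ p := by
    rw [← Real.rpow_mul (hf x), mul_div_cancel₀ _ ht.ne']
  have hjensen : ∫ x, f x ^ p ∂μ ≤ (∫ x, f x ^ t ∂μ) ^ (p / t) := by
    have := (Real.concaveOn_rpow (div_pos hp ht).le ((div_le_one ht).2 hpt)).le_map_integral
      (continuousOn_id.rpow_const fun _ _ => Or.inr (div_pos hp ht).le) isClosed_Ici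
      (ae_of_all _ fun x => Real.rpow_nonneg (hf x) t) hft
      (by simpa only [Function.comp_def, hpow] using hfp)
    simpa only [hpow] using this
  calc (∫ x, f x ^ p ∂μ) ^ (1 / p) ≤ ((∫ x, f x ^ t ∂μ) ^ (p / t)) ^ (1 / p) := by
        gcongr
        exact integral_nonneg fun x => Real.rpow_nonneg (hf x) p
    _ = (∫ x, f x ^ t ∂μ) ^ (1 / t) := by
        rw [← Real.rpow_mul (integral_nonneg fun x => Real.rpow_nonneg (hf x) t)]
        field_simp

lemma rpow_intervalIntegral_rpow_le {F : ℝ → ℝ} (hF : Continuous F) (hF0 : 0 ≤ F)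
    {p t : ℝ} (hp : 0 < p) (hpt : p ≤ t) :
    (∫ x in (0 : ℝ)..1, F x ^ p) ^ (1 / p) ≤ (∫ x in (0 : ℝ)..1, F x ^ t) ^ (1 / t) := by
  have : IsProbabilityMeasure (volume.restrict (Set.Ioc (0 : ℝ) 1)) := ⟨by simp⟩
  simp only [intervalIntegral.integral_of_le zero_le_one]
  exact rpow_integral_rpow_le hF0 hp hpt
    ((hF.rpow_const fun _ => Or.inr hp.le).integrableOn_Ioc)
    ((hF.rpow_const fun _ => Or.inr (hp.trans_le hpt).le).integrableOn_Ioc)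

noncomputable def dirichletKernel (n : ℕ) (x : ℝ) : ℂ := ∑ k ∈ range n, fourierExp k x

@[fun_prop]
lemma continuous_dirichletKernel (n : ℕ) : Continuous (dirichletKernel n) := by
  unfold dirichletKernel; fun_prop

lemma norm_dirichletKernel_le (n : ℕ) (x : ℝ) : ‖dirichletKernel n x‖ ≤ n :=
  (norm_sum_le _ _).trans (by simp)

lemma norm_dirichletKernel_one_sub (n : ℕ) (x : ℝ) :
    ‖dirichletKernel n (1 - x)‖ = ‖dirichletKernel n x‖ := by
  simp only [dirichletKernel, fourierExp_one_sub, ← map_sum, Complex.norm_conj]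

lemma norm_dirichletKernel_le_inv {x : ℝ} (hx0 : 0 < x) (hx : x ≤ 1 / 2) (n : ℕ) :
    ‖dirichletKernel n x‖ ≤ (2 * x)⁻¹ := by
  have hsin : 2 * x ≤ Real.sin (Real.pi * x) := by
    calc 2 * x = 2 / Real.pi * (Real.pi * x) := by field_simp
      _ ≤ Real.sin (Real.pi * x) :=
        Real.mul_le_sin (by positivity) (by nlinarith [Real.pi_pos])
  have hden : 4 * x ≤ ‖fourierExp 1 x - 1‖ := by
    rw [norm_fourierExp_one_sub_one]
    linarith [le_abs_self (Real.sin (Real.pi * x))]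
  have hne : fourierExp 1 x ≠ 1 := by
    rw [← sub_ne_zero, ← norm_pos_iff]; linarith
  have hnum : ‖fourierExp 1 x ^ n - 1‖ ≤ 2 := by
    simpa [one_add_one_eq_two] using norm_sub_le (fourierExp 1 x ^ n) 1
  rw [dirichletKernel, sum_congr rfl fun k _ => fourierExp_eq_pow k x, geom_sum_eq hne,
    norm_div, div_le_iff₀ (by linarith)]
  calc ‖fourierExp 1 x ^ n - 1‖ ≤ 2 := hnum
    _ = (2 * x)⁻¹ * (4 * x) := by field_simp; ring
    _ ≤ (2 * x)⁻¹ * ‖fourierExp 1 x - 1‖ := by gcongr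

lemma integral_norm_dirichletKernel_le {n : ℕ} (hn : 1 ≤ n) :
    ∫ x in (0 : ℝ)..1, ‖dirichletKernel n x‖ ≤ 1 + Real.log n := by
  have hn0 : (0 : ℝ) < n := by exact_mod_cast hn
  set a : ℝ := (2 * n)⁻¹
  have ha : 0 < a := by positivity
  have ha2 : a ≤ 1 / 2 := by
    rw [one_div]; exact inv_anti₀ two_pos (by norm_cast; omega)
  have hint (u v : ℝ) : IntervalIntegrable (fun x => ‖dirichletKernel n x‖) volume u v :=
    (continuous_dirichletKernel n).norm.intervalIntegrable u v
  have hnear : ∫ x in (0 : ℝ)..a, ‖dirichletKernel n x‖ ≤ 1 / 2 := by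
    calc ∫ x in (0 : ℝ)..a, ‖dirichletKernel n x‖ ≤ ∫ x in (0 : ℝ)..a, (n : ℝ) :=
          intervalIntegral.integral_mono_on ha.le (hint _ _) intervalIntegrable_const
            fun x _ => norm_dirichletKernel_le n x
      _ = 1 / 2 := by simp [a]; field_simp
  have hfar : ∫ x in a..(1 / 2 : ℝ), ‖dirichletKernel n x‖ ≤ 2⁻¹ * Real.log n := by
    calc ∫ x in a..(1 / 2 : ℝ), ‖dirichletKernel n x‖ ≤ ∫ x in a..(1 / 2 : ℝ), 2⁻¹ * x⁻¹ := by
          refine intervalIntegral.integral_mono_on ha2 (hint _ _)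
            ((intervalIntegral.intervalIntegrable_inv (fun x hx => ?_)
              continuousOn_id).const_mul _) fun x hx => ?_
          · rw [Set.uIcc_of_le ha2] at hx; exact (ha.trans_le hx.1).ne'
          · rw [← mul_inv]; exact norm_dirichletKernel_le_inv (ha.trans_le hx.1) hx.2 n
      _ = 2⁻¹ * Real.log n := by
          rw [intervalIntegral.integral_const_mul, integral_inv_of_pos ha (by norm_num)]
          congr 2; simp only [a]; field_simp
  have hhalf : ∫ x in (0 : ℝ)..1, ‖dirichletKernel n x‖ =
      2 * ∫ x in (0 : ℝ)..1 / 2, ‖dirichletKernel n x‖ := by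
    rw [← intervalIntegral.integral_add_adjacent_intervals (hint 0 (1 / 2)) (hint _ 1), two_mul]
    have hsymm := intervalIntegral.integral_comp_sub_left (fun x => ‖dirichletKernel n x‖)
      (1 : ℝ) (a := 0) (b := 1 / 2)
    norm_num [norm_dirichletKernel_one_sub] at hsymm
    rw [hsymm]
  rw [hhalf, ← intervalIntegral.integral_add_adjacent_intervals (hint 0 a) (hint a _)]
  linarith

lemma integral_norm_dirichletKernel_sq (n : ℕ) :
    ∫ x in (0 : ℝ)..1, ‖dirichletKernel n x‖ ^ 2 = n := by
  simpa [dirichletKernel] using integral_norm_sum_fourierExp_sq (fun _ => 1) n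

lemma integral_norm_dirichletKernel_rpow_le {n : ℕ} (hn : 1 ≤ n) {t : ℝ} (ht1 : 1 ≤ t)
    (ht2 : t ≤ 2) :
    ∫ x in (0 : ℝ)..1, ‖dirichletKernel n x‖ ^ t ≤
      2 * ((1 + Real.log n) / √n) ^ (2 - t) * √n ^ t := by
  set s := √(n : ℝ)
  set r := (1 + Real.log n) / s
  have hs : 0 < s := Real.sqrt_pos.2 (by exact_mod_cast hn)
  have hr : 0 < r :=
    div_pos (by linarith [Real.log_nonneg (show (1 : ℝ) ≤ n by exact_mod_cast hn)]) hs
  have hsn : s ^ 2 = n := Real.sq_sqrt (Nat.cast_nonneg n)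
  -- the height `s / r = n / (1 + log n)` balances the `L¹` and `L²` contributions
  set a := s / r
  have ha : 0 < a := div_pos hs hr
  have hint (k : ℕ) : IntervalIntegrable (fun x => ‖dirichletKernel n x‖ ^ k) volume 0 1 :=
    ((continuous_dirichletKernel n).norm.pow k).intervalIntegrable 0 1
  calc ∫ x in (0 : ℝ)..1, ‖dirichletKernel n x‖ ^ t
      ≤ ∫ x in (0 : ℝ)..1, (a ^ (t - 1) * ‖dirichletKernel n x‖ ^ 1
          + a ^ (t - 2) * ‖dirichletKernel n x‖ ^ 2) := by
        refine intervalIntegral.integral_mono_on zero_le_one ?_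
          (((hint 1).const_mul _).add ((hint 2).const_mul _)) fun x _ => ?_
        · exact ((continuous_dirichletKernel n).norm.rpow_const
            fun _ => Or.inr (by linarith)).intervalIntegrable 0 1
        · rw [pow_one]
          exact Real.rpow_le_mul_add_mul_sq ht1 ht2 ha (norm_nonneg _)
    _ ≤ a ^ (t - 1) * (r * s) + a ^ (t - 2) * s ^ 2 := by
        rw [intervalIntegral.integral_add ((hint 1).const_mul _) ((hint 2).const_mul _),
          intervalIntegral.integral_const_mul, intervalIntegral.integral_const_mul,
          integral_norm_dirichletKernel_sq, hsn, div_mul_cancel₀ _ hs.ne']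
        simp only [pow_one]
        gcongr
        exact integral_norm_dirichletKernel_le hn
    _ = 2 * r ^ (2 - t) * s ^ t := by
        simp only [a]
        rw [Real.div_rpow hs.le hr.le, Real.div_rpow hs.le hr.le, Real.rpow_sub hs,
          Real.rpow_sub hr, Real.rpow_sub hs, Real.rpow_sub hr, Real.rpow_sub hr]
        simp only [Real.rpow_one, Real.rpow_two]
        field_simp
        ring

lemma rpow_integral_norm_dirichletKernel_rpow_le {n : ℕ} (hn : 1 ≤ n) {p t : ℝ} (hp : 0 < p)
    (hpt : p ≤ t) (ht1 : 1 ≤ t) (ht2 : t ≤ 2) :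
    (∫ x in (0 : ℝ)..1, ‖dirichletKernel n x‖ ^ p) ^ (1 / p) ≤
      (2 * ((1 + Real.log n) / √n) ^ (2 - t)) ^ (1 / t) * √n := by
  have ht : 0 < t := hp.trans_le hpt
  calc (∫ x in (0 : ℝ)..1, ‖dirichletKernel n x‖ ^ p) ^ (1 / p)
      ≤ (∫ x in (0 : ℝ)..1, ‖dirichletKernel n x‖ ^ t) ^ (1 / t) :=
        rpow_intervalIntegral_rpow_le (continuous_dirichletKernel n).norm
          (fun _ => norm_nonneg _) hp hpt
    _ ≤ (2 * ((1 + Real.log n) / √n) ^ (2 - t) * √n ^ t) ^ (1 / t) := by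
        gcongr
        · exact intervalIntegral.integral_nonneg zero_le_one fun _ _ => by positivity
        · exact integral_norm_dirichletKernel_rpow_le hn ht1 ht2
    _ = (2 * ((1 + Real.log n) / √n) ^ (2 - t)) ^ (1 / t) * √n := by
        rw [Real.mul_rpow (by positivity) (by positivity), ← Real.rpow_mul (by positivity),
          mul_one_div_cancel ht.ne', Real.rpow_one]

/-- Coefficients of the Rudin–Shapiro pair, arranged so that `P_{m+1} = P_m + e_{2^m} Q_m` and
`Q_{m+1} = P_m - e_{2^m} Q_m`. -/
noncomputable def rudinShapiroCoeff : ℕ → (ℕ → ℝ) × (ℕ → ℝ)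
  | 0 => (fun _ => 1, fun _ => 1)
  | m + 1 =>
    (fun k => if k < 2 ^ m then (rudinShapiroCoeff m).1 k else (rudinShapiroCoeff m).2 (k - 2 ^ m),
     fun k => if k < 2 ^ m then (rudinShapiroCoeff m).1 k else -(rudinShapiroCoeff m).2 (k - 2 ^ m))

noncomputable def rudinShapiroP (m : ℕ) (x : ℝ) : ℂ :=
  ∑ k ∈ range (2 ^ m), ((rudinShapiroCoeff m).1 k : ℂ) * fourierExp k x

noncomputable def rudinShapiroQ (m : ℕ) (x : ℝ) : ℂ :=
  ∑ k ∈ range (2 ^ m), ((rudinShapiroCoeff m).2 k : ℂ) * fourierExp k x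

lemma rudinShapiroCoeff_eq_one_or_eq_neg_one (m k : ℕ) :
    ((rudinShapiroCoeff m).1 k = 1 ∨ (rudinShapiroCoeff m).1 k = -1) ∧
      ((rudinShapiroCoeff m).2 k = 1 ∨ (rudinShapiroCoeff m).2 k = -1) := by
  induction m generalizing k with
  | zero => simp [rudinShapiroCoeff]
  | succ m ih =>
    simp only [rudinShapiroCoeff]
    split_ifs
    · exact ⟨(ih k).1, (ih k).1⟩
    · obtain ⟨-, h | h⟩ := ih (k - 2 ^ m) <;> simp [h]

lemma rudinShapiroCoeff_fst_sq (m k : ℕ) : (rudinShapiroCoeff m).1 k ^ 2 = 1 := by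
  rcases (rudinShapiroCoeff_eq_one_or_eq_neg_one m k).1 with h | h <;> simp [h]

lemma sum_range_two_pow_succ {M : Type*} [AddCommMonoid M] (f : ℕ → M) (m : ℕ) :
    ∑ k ∈ range (2 ^ (m + 1)), f k =
      ∑ k ∈ range (2 ^ m), f k + ∑ k ∈ range (2 ^ m), f (2 ^ m + k) := by
  rw [pow_succ, mul_two, sum_range_add]

@[fun_prop]
lemma continuous_rudinShapiroP (m : ℕ) : Continuous (rudinShapiroP m) := by
  unfold rudinShapiroP; fun_prop

lemma rudinShapiroP_succ (m : ℕ) (x : ℝ) :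
    rudinShapiroP (m + 1) x = rudinShapiroP m x + fourierExp (2 ^ m) x * rudinShapiroQ m x := by
  rw [rudinShapiroP, sum_range_two_pow_succ, rudinShapiroP, rudinShapiroQ, mul_sum]
  congr 1 <;> refine sum_congr rfl fun k hk => ?_
  · simp [rudinShapiroCoeff, mem_range.1 hk]
  · simp [rudinShapiroCoeff, fourierExp_add]; ring

lemma rudinShapiroQ_succ (m : ℕ) (x : ℝ) :
    rudinShapiroQ (m + 1) x = rudinShapiroP m x - fourierExp (2 ^ m) x * rudinShapiroQ m x := by
  rw [rudinShapiroQ, sum_range_two_pow_succ, rudinShapiroP, rudinShapiroQ, mul_sum,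
    sub_eq_add_neg, ← sum_neg_distrib]
  congr 1 <;> refine sum_congr rfl fun k hk => ?_
  · simp [rudinShapiroCoeff, mem_range.1 hk]
  · simp [rudinShapiroCoeff, fourierExp_add]; ring

lemma norm_rudinShapiroP_sq_add_norm_rudinShapiroQ_sq (m : ℕ) (x : ℝ) :
    ‖rudinShapiroP m x‖ ^ 2 + ‖rudinShapiroQ m x‖ ^ 2 = 2 ^ (m + 1) := by
  induction m with
  | zero => simp [rudinShapiroP, rudinShapiroQ, rudinShapiroCoeff]; norm_num
  | succ m ih =>
    have := parallelogram_law_with_norm ℝ (rudinShapiroP m x)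
      (fourierExp (2 ^ m) x * rudinShapiroQ m x)
    rw [rudinShapiroP_succ, rudinShapiroQ_succ, pow_succ _ (m + 1), ← ih]
    simp only [norm_mul, norm_fourierExp, one_mul] at this
    linear_combination this

lemma norm_rudinShapiroP_le (m : ℕ) (x : ℝ) : ‖rudinShapiroP m x‖ ≤ √(2 ^ (m + 1)) :=
  Real.le_sqrt_of_sq_le (by
    linarith [norm_rudinShapiroP_sq_add_norm_rudinShapiroQ_sq m x,
      sq_nonneg ‖rudinShapiroQ m x‖])

lemma integral_norm_rudinShapiroP_sq (m : ℕ) :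
    ∫ x in (0 : ℝ)..1, ‖rudinShapiroP m x‖ ^ 2 = 2 ^ m := by
  simp [rudinShapiroP, integral_norm_sum_fourierExp_sq, rudinShapiroCoeff_fst_sq]

lemma rpow_div_two_le_integral_norm_rudinShapiroP_rpow (m : ℕ) {q : ℝ} (hq0 : 0 ≤ q)
    (hq2 : q ≤ 2) :
    √(2 ^ (m + 1)) ^ q / 2 ≤ ∫ x in (0 : ℝ)..1, ‖rudinShapiroP m x‖ ^ q := by
  set A := √(2 ^ (m + 1) : ℝ)
  have hA : 0 < A := Real.sqrt_pos.2 (by positivity)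
  have hA2 : A ^ (2 : ℝ) = 2 * 2 ^ m := by
    rw [Real.rpow_two, Real.sq_sqrt (by positivity), pow_succ, mul_comm]
  have hsq := integral_sq_le_rpow_mul_integral_rpow (continuous_rudinShapiroP m).norm hq0 hq2
    (fun x => norm_nonneg _) (norm_rudinShapiroP_le m)
  rw [integral_norm_rudinShapiroP_sq] at hsq
  calc A ^ q / 2 = (A ^ (2 - q))⁻¹ * (A ^ (2 : ℝ) / 2) := by
        rw [Real.rpow_sub hA]; field_simp
    _ ≤ (A ^ (2 - q))⁻¹ * (A ^ (2 - q) * ∫ x in (0 : ℝ)..1, ‖rudinShapiroP m x‖ ^ q) := by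
        rw [hA2]; gcongr; linarith
    _ = ∫ x in (0 : ℝ)..1, ‖rudinShapiroP m x‖ ^ q :=
        inv_mul_cancel_left₀ (Real.rpow_pos_of_pos hA _).ne' _

lemma sqrt_two_pow_succ_div_le_rpow_integral_norm_rudinShapiroP_rpow (m : ℕ) {q : ℝ}
    (hq0 : 0 < q) (hq2 : q ≤ 2) :
    √(2 ^ (m + 1)) / 2 ^ (1 / q) ≤ (∫ x in (0 : ℝ)..1, ‖rudinShapiroP m x‖ ^ q) ^ (1 / q) :=
  calc √(2 ^ (m + 1)) / 2 ^ (1 / q) = (√(2 ^ (m + 1)) ^ q / 2) ^ (1 / q) := by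
        rw [Real.div_rpow (by positivity) zero_le_two, ← Real.rpow_mul (by positivity),
          mul_one_div_cancel hq0.ne', Real.rpow_one]
    _ ≤ (∫ x in (0 : ℝ)..1, ‖rudinShapiroP m x‖ ^ q) ^ (1 / q) := by
        gcongr
        exact rpow_div_two_le_integral_norm_rudinShapiroP_rpow m hq0.le hq2

lemma tendsto_one_add_log_div_sqrt_atTop :
    Tendsto (fun x : ℝ => (1 + Real.log x) / √x) atTop (𝓝 0) := by
  have hhalf : (0 : ℝ) < 1 / 2 := by norm_num
  have h : (fun x => 1 + Real.log x) =o[atTop] fun x => x ^ (1 / 2 : ℝ) :=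
    ((Asymptotics.isLittleO_one_left_iff ℝ).2
      (tendsto_norm_atTop_atTop.comp (tendsto_rpow_atTop hhalf))).add
      (isLittleO_log_rpow_atTop hhalf)
  exact h.tendsto_div_nhds_zero.congr fun x => by rw [Real.sqrt_eq_rpow]

lemma tendsto_two_mul_one_add_log_div_sqrt_two_pow_rpow_rpow {a b : ℝ} (ha : 0 < a)
    (hb : 0 < b) :
    Tendsto (fun m : ℕ => (2 * ((1 + Real.log (2 ^ m : ℕ)) / √(2 ^ m : ℕ)) ^ a) ^ b) atTop
      (𝓝 0) := by
  have hr := tendsto_one_add_log_div_sqrt_atTop.comp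
    (tendsto_natCast_atTop_atTop.comp (tendsto_pow_atTop_atTop_of_one_lt one_lt_two))
  have h2 := (hr.rpow_const_nhds_zero ha).const_mul 2
  rw [mul_zero] at h2
  exact h2.rpow_const_nhds_zero hb

/-- For `0 < q ≤ p < 2` and `ε > 0`, there are `n ≥ 1` and signs
`η_0, …, η_{n-1} ∈ {−1, +1}` with
`‖D_n‖_{L^p(𝕋)} ≤ ε ‖∑_{k<n} η_k e_k‖_{L^q(𝕋)}`. -/
theorem dirichlet_small_against_random_signs
    (p q : ℝ) (hq0 : 0 < q) (hqp : q ≤ p) (hp2 : p < 2)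
    (ε : ℝ) (hε : 0 < ε) :
    ∃ (n : ℕ) (η : ℕ → ℝ), 1 ≤ n ∧ (∀ k < n, η k = 1 ∨ η k = -1) ∧
      (∫ x in (0 : ℝ)..1,
          ‖∑ k ∈ Finset.range n,
              Complex.exp (2 * Real.pi * Complex.I * (k : ℂ) * (x : ℂ))‖ ^ p) ^ (1 / p) ≤
        ε * (∫ x in (0 : ℝ)..1,
          ‖∑ k ∈ Finset.range n,
              (η k : ℂ) * Complex.exp (2 * Real.pi * Complex.I * (k : ℂ) * (x : ℂ))‖ ^ q) ^ (1 / q) := by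
  have hp : 0 < p := hq0.trans_le hqp
  have ht2 : max p 1 < 2 := max_lt hp2 one_lt_two
  obtain ⟨m, hm⟩ := ((tendsto_two_mul_one_add_log_div_sqrt_two_pow_rpow_rpow (sub_pos.2 ht2)
    (b := 1 / max p 1) (by positivity)).eventually (ge_mem_nhds (by positivity : 0 < ε / 2 ^ (1 / q)))).exists
  refine ⟨2 ^ m, (rudinShapiroCoeff m).1, Nat.one_le_two_pow,
    fun k _ => (rudinShapiroCoeff_eq_one_or_eq_neg_one m k).1, ?_⟩
  change (∫ x in (0 : ℝ)..1, ‖dirichletKernel (2 ^ m) x‖ ^ p) ^ (1 / p) ≤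
    ε * (∫ x in (0 : ℝ)..1, ‖rudinShapiroP m x‖ ^ q) ^ (1 / q)
  have hsqrt : √((2 ^ m : ℕ) : ℝ) ≤ √(2 ^ (m + 1)) :=
    Real.sqrt_le_sqrt (by push_cast; gcongr <;> norm_num)
  calc (∫ x in (0 : ℝ)..1, ‖dirichletKernel (2 ^ m) x‖ ^ p) ^ (1 / p)
      ≤ (2 * ((1 + Real.log (2 ^ m : ℕ)) / √(2 ^ m : ℕ)) ^ (2 - max p 1)) ^ (1 / max p 1) *
          √(2 ^ m : ℕ) :=
        rpow_integral_norm_dirichletKernel_rpow_le Nat.one_le_two_pow hp (le_max_left p 1)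
          (le_max_right p 1) ht2.le
    _ ≤ ε / 2 ^ (1 / q) * √(2 ^ (m + 1)) := by gcongr
    _ = ε * (√(2 ^ (m + 1)) / 2 ^ (1 / q)) := by ring
    _ ≤ ε * (∫ x in (0 : ℝ)..1, ‖rudinShapiroP m x‖ ^ q) ^ (1 / q) := by
        gcongr
        exact sqrt_two_pow_succ_div_le_rpow_integral_norm_rudinShapiroP_rpow m hq0
          (hqp.trans hp2.le)
end
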